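/- Let S > 0 satisfy S|t|₂² ≤ ‖t‖₁² for all t ∈ H¹(ℝᴺ). Assume g₁, g₂ ∈ L²(ℝᴺ)∩L^∞(ℝᴺ) nonnegative, and F₁, F₂ continuous with 0 ≤ F_i(t) ≤ (S/(4|g_i|_∞))t² + c₀|t|. Then for all u ∈ H¹(ℝᴺ), J(u,u) = ‖u‖₁² − ∫(g₁F₁(u) + g₂F₂(u))dx ≥ ½‖u‖₁² − c₀S^{-1/2}(|g₁|₂ + |g₂|₂)‖u‖₁; in particular J is bounded below on the diagonal X⁺. -/

import Mathlib

open MeasureTheory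

/-- Membership in `H¹(ℝᴺ)` is expressed as: `t ∈ L²` and `∇t ∈ L²`; `‖t‖₁²` is
`∫ (‖∇t‖² + t²)`, `|t|₂²` is `∫ t²`, `|g|₂ = √(∫ g²)` and `M_i` is a pointwise bound for
`g_i` (its `L^∞` norm). `J(u,u) = ‖u‖₁² − ∫(g₁F₁(u) + g₂F₂(u))`. -/
theorem stmt_13 (N : ℕ) (S c₀ M₁ M₂ : ℝ) (hS : 0 < S) (hc₀ : 0 ≤ c₀)
    (hM₁ : 0 < M₁) (hM₂ : 0 < M₂)
    (g₁ g₂ : EuclideanSpace ℝ (Fin N) → ℝ) (F₁ F₂ : ℝ → ℝ)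
    (hSob : ∀ t : EuclideanSpace ℝ (Fin N) → ℝ, MemLp t 2 volume →
      MemLp (fun x => fderiv ℝ t x) 2 volume →
      S * ∫ x, (t x) ^ 2 ≤ ∫ x, (‖fderiv ℝ t x‖ ^ 2 + (t x) ^ 2))
    (hg₁2 : MemLp g₁ 2 volume) (hg₁0 : ∀ x, 0 ≤ g₁ x) (hg₁b : ∀ x, g₁ x ≤ M₁)
    (hg₂2 : MemLp g₂ 2 volume) (hg₂0 : ∀ x, 0 ≤ g₂ x) (hg₂b : ∀ x, g₂ x ≤ M₂)
    (hF₁c : Continuous F₁) (hF₂c : Continuous F₂)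
    (hF₁ : ∀ t : ℝ, 0 ≤ F₁ t ∧ F₁ t ≤ S / (4 * M₁) * t ^ 2 + c₀ * |t|)
    (hF₂ : ∀ t : ℝ, 0 ≤ F₂ t ∧ F₂ t ≤ S / (4 * M₂) * t ^ 2 + c₀ * |t|)
    (u : EuclideanSpace ℝ (Fin N) → ℝ)
    (hu2 : MemLp u 2 volume) (hu'2 : MemLp (fun x => fderiv ℝ u x) 2 volume) :
    (∫ x, (‖fderiv ℝ u x‖ ^ 2 + (u x) ^ 2)) -
        ∫ x, (g₁ x * F₁ (u x) + g₂ x * F₂ (u x)) ≥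
      (1 / 2) * (∫ x, (‖fderiv ℝ u x‖ ^ 2 + (u x) ^ 2)) -
        c₀ * S ^ (-(1 / 2 : ℝ)) *
          (Real.sqrt (∫ x, (g₁ x) ^ 2) + Real.sqrt (∫ x, (g₂ x) ^ 2)) *
          Real.sqrt (∫ x, (‖fderiv ℝ u x‖ ^ 2 + (u x) ^ 2)) := by
  set A : ℝ := ∫ x, (‖fderiv ℝ u x‖ ^ 2 + (u x) ^ 2) with hAdef
  have hA0 : 0 ≤ A := integral_nonneg fun x => by positivity
  have hIu2 : Integrable (fun x => (u x) ^ 2) volume := hu2.integrable_sq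
  have hIg1 : Integrable (fun x => (g₁ x) ^ 2) volume := hg₁2.integrable_sq
  have hIg2 : Integrable (fun x => (g₂ x) ^ 2) volume := hg₂2.integrable_sq
  set I2 : ℝ := ∫ x, (u x) ^ 2 with hI2def
  have hI20 : 0 ≤ I2 := integral_nonneg fun x => sq_nonneg _
  have hSob' : S * I2 ≤ A := hSob u hu2 hu'2
  -- integrability of g_i * |u|
  have habs : MemLp (fun x => |u x|) 2 volume := by
    simpa [Real.norm_eq_abs] using hu2.norm
  have hIg1u : Integrable (fun x => g₁ x * |u x|) volume := by
    refine Integrable.mono' (((hIg1.add hIu2)).const_mul (1/2)) (hg₁2.1.mul habs.1) ?_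
    filter_upwards with x
    have h1 : 0 ≤ g₁ x * |u x| := mul_nonneg (hg₁0 x) (abs_nonneg _)
    rw [Real.norm_of_nonneg h1]
    simp only [Pi.add_apply]
    nlinarith [sq_nonneg (g₁ x - |u x|), sq_abs (u x)]
  have hIg2u : Integrable (fun x => g₂ x * |u x|) volume := by
    refine Integrable.mono' (((hIg2.add hIu2)).const_mul (1/2)) (hg₂2.1.mul habs.1) ?_
    filter_upwards with x
    have h1 : 0 ≤ g₂ x * |u x| := mul_nonneg (hg₂0 x) (abs_nonneg _)
    rw [Real.norm_of_nonneg h1]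
    simp only [Pi.add_apply]
    nlinarith [sq_nonneg (g₂ x - |u x|), sq_abs (u x)]
  -- pointwise bound on the nonlinear term
  have hpt : ∀ x, g₁ x * F₁ (u x) + g₂ x * F₂ (u x) ≤
      S / 2 * (u x) ^ 2 + (c₀ * (g₁ x * |u x|) + c₀ * (g₂ x * |u x|)) := by
    intro x
    have e1 : g₁ x * (S / (4 * M₁)) ≤ S / 4 := by
      have := mul_le_mul_of_nonneg_right (hg₁b x) (le_of_lt (by positivity : (0:ℝ) < S / (4 * M₁)))
      calc g₁ x * (S / (4 * M₁)) ≤ M₁ * (S / (4 * M₁)) := this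
        _ = S / 4 := by field_simp
    have e2 : g₂ x * (S / (4 * M₂)) ≤ S / 4 := by
      have := mul_le_mul_of_nonneg_right (hg₂b x) (le_of_lt (by positivity : (0:ℝ) < S / (4 * M₂)))
      calc g₂ x * (S / (4 * M₂)) ≤ M₂ * (S / (4 * M₂)) := this
        _ = S / 4 := by field_simp
    have b1 : g₁ x * F₁ (u x) ≤ S / 4 * (u x) ^ 2 + c₀ * (g₁ x * |u x|) := by
      calc g₁ x * F₁ (u x) ≤ g₁ x * (S / (4 * M₁) * (u x) ^ 2 + c₀ * |u x|) :=
            mul_le_mul_of_nonneg_left (hF₁ (u x)).2 (hg₁0 x)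
        _ = (g₁ x * (S / (4 * M₁))) * (u x) ^ 2 + c₀ * (g₁ x * |u x|) := by ring
        _ ≤ S / 4 * (u x) ^ 2 + c₀ * (g₁ x * |u x|) := by
            have := mul_le_mul_of_nonneg_right e1 (sq_nonneg (u x)); linarith
    have b2 : g₂ x * F₂ (u x) ≤ S / 4 * (u x) ^ 2 + c₀ * (g₂ x * |u x|) := by
      calc g₂ x * F₂ (u x) ≤ g₂ x * (S / (4 * M₂) * (u x) ^ 2 + c₀ * |u x|) :=
            mul_le_mul_of_nonneg_left (hF₂ (u x)).2 (hg₂0 x)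
        _ = (g₂ x * (S / (4 * M₂))) * (u x) ^ 2 + c₀ * (g₂ x * |u x|) := by ring
        _ ≤ S / 4 * (u x) ^ 2 + c₀ * (g₂ x * |u x|) := by
            have := mul_le_mul_of_nonneg_right e2 (sq_nonneg (u x)); linarith
    linarith
  have hpt0 : ∀ x, 0 ≤ g₁ x * F₁ (u x) + g₂ x * F₂ (u x) := fun x =>
    add_nonneg (mul_nonneg (hg₁0 x) (hF₁ (u x)).1) (mul_nonneg (hg₂0 x) (hF₂ (u x)).1)
  -- integrability of the nonlinear term
  have hbnd : Integrable (fun x => S / 2 * (u x) ^ 2 +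
      (c₀ * (g₁ x * |u x|) + c₀ * (g₂ x * |u x|))) volume :=
    (hIu2.const_mul _).add ((hIg1u.const_mul _).add (hIg2u.const_mul _))
  have hImeas : AEStronglyMeasurable (fun x => g₁ x * F₁ (u x) + g₂ x * F₂ (u x)) volume :=
    (hg₁2.1.mul (hF₁c.comp_aestronglyMeasurable hu2.1)).add
      (hg₂2.1.mul (hF₂c.comp_aestronglyMeasurable hu2.1))
  have hIJ : Integrable (fun x => g₁ x * F₁ (u x) + g₂ x * F₂ (u x)) volume := by
    refine Integrable.mono' hbnd hImeas ?_
    filter_upwards with x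
    rw [Real.norm_of_nonneg (hpt0 x)]
    exact hpt x
  -- bound the integral of the nonlinear term
  have hH : (∫ x, (g₁ x * F₁ (u x) + g₂ x * F₂ (u x))) ≤
      S / 2 * I2 + (c₀ * ∫ x, g₁ x * |u x|) + (c₀ * ∫ x, g₂ x * |u x|) := by
    have := integral_mono hIJ hbnd (fun x => hpt x)
    have hb1 : Integrable (fun x => c₀ * (g₁ x * |u x|) + c₀ * (g₂ x * |u x|)) volume :=
      (hIg1u.const_mul _).add (hIg2u.const_mul _)
    rw [integral_add (hIu2.const_mul (S/2)) hb1,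
      integral_add (hIg1u.const_mul c₀) (hIg2u.const_mul c₀),
      integral_const_mul, integral_const_mul, integral_const_mul] at this
    linarith
  -- Cauchy-Schwarz
  have hCS : ∀ (g : EuclideanSpace ℝ (Fin N) → ℝ), MemLp g 2 volume → (∀ x, 0 ≤ g x) →
      (∫ x, g x * |u x|) ≤ Real.sqrt (∫ x, (g x) ^ 2) * Real.sqrt I2 := by
    intro g hg hg0
    have hconj : Real.HolderConjugate 2 2 := Real.holderConjugate_iff.mpr ⟨one_lt_two, by norm_num⟩
    have h2 : (ENNReal.ofReal 2) = 2 := by norm_num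
    have hg' : MemLp g (ENNReal.ofReal 2) volume := by rw [h2]; exact hg
    have habs' : MemLp (fun x => |u x|) (ENNReal.ofReal 2) volume := by rw [h2]; exact habs
    have := integral_mul_le_Lp_mul_Lq_of_nonneg (μ := volume) hconj
      (Filter.Eventually.of_forall hg0) (Filter.Eventually.of_forall fun x => abs_nonneg (u x))
      hg' habs'
    have hg20 : 0 ≤ ∫ x, (g x) ^ 2 := integral_nonneg fun x => sq_nonneg _
    calc (∫ x, g x * |u x|) ≤ (∫ x, (g x) ^ (2:ℝ)) ^ (1/(2:ℝ)) * (∫ x, |u x| ^ (2:ℝ)) ^ (1/(2:ℝ)) :=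
          this
      _ = Real.sqrt (∫ x, (g x) ^ 2) * Real.sqrt I2 := by
          have e1 : ∀ y : ℝ, y ^ (2:ℝ) = y ^ 2 := fun y => by
            rw [show (2:ℝ) = ((2:ℕ):ℝ) by norm_num, Real.rpow_natCast]
          simp_rw [e1, sq_abs]
          rw [← Real.sqrt_eq_rpow, ← Real.sqrt_eq_rpow]
  have hCS1 := hCS g₁ hg₁2 hg₁0
  have hCS2 := hCS g₂ hg₂2 hg₂0
  -- √I2 ≤ S^{-1/2} √A
  have hsS : (0:ℝ) < Real.sqrt S := Real.sqrt_pos.2 hS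
  have hrpow : S ^ (-(1/2 : ℝ)) = (Real.sqrt S)⁻¹ := by
    rw [Real.rpow_neg hS.le, ← Real.sqrt_eq_rpow]
  have hsqI2 : Real.sqrt I2 ≤ S ^ (-(1/2 : ℝ)) * Real.sqrt A := by
    rw [hrpow]
    have h1 : I2 ≤ A / S := (le_div_iff₀' hS).2 hSob'
    calc Real.sqrt I2 ≤ Real.sqrt (A / S) := Real.sqrt_le_sqrt h1
      _ = Real.sqrt A / Real.sqrt S := Real.sqrt_div hA0 S
      _ = (Real.sqrt S)⁻¹ * Real.sqrt A := by ring
  -- combine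
  have hG1 : 0 ≤ Real.sqrt (∫ x, (g₁ x) ^ 2) := Real.sqrt_nonneg _
  have hG2 : 0 ≤ Real.sqrt (∫ x, (g₂ x) ^ 2) := Real.sqrt_nonneg _
  have hs0 : 0 ≤ S ^ (-(1/2 : ℝ)) := by rw [hrpow]; positivity
  have hsqI20 : 0 ≤ Real.sqrt I2 := Real.sqrt_nonneg _
  have hT1 : c₀ * (∫ x, g₁ x * |u x|) ≤
      c₀ * (Real.sqrt (∫ x, (g₁ x) ^ 2) * (S ^ (-(1/2 : ℝ)) * Real.sqrt A)) := by
    refine mul_le_mul_of_nonneg_left ?_ hc₀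
    calc (∫ x, g₁ x * |u x|) ≤ Real.sqrt (∫ x, (g₁ x) ^ 2) * Real.sqrt I2 := hCS1
      _ ≤ Real.sqrt (∫ x, (g₁ x) ^ 2) * (S ^ (-(1/2 : ℝ)) * Real.sqrt A) :=
          mul_le_mul_of_nonneg_left hsqI2 hG1
  have hT2 : c₀ * (∫ x, g₂ x * |u x|) ≤
      c₀ * (Real.sqrt (∫ x, (g₂ x) ^ 2) * (S ^ (-(1/2 : ℝ)) * Real.sqrt A)) := by
    refine mul_le_mul_of_nonneg_left ?_ hc₀
    calc (∫ x, g₂ x * |u x|) ≤ Real.sqrt (∫ x, (g₂ x) ^ 2) * Real.sqrt I2 := hCS2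
      _ ≤ Real.sqrt (∫ x, (g₂ x) ^ 2) * (S ^ (-(1/2 : ℝ)) * Real.sqrt A) :=
          mul_le_mul_of_nonneg_left hsqI2 hG2
  have hhalf : S / 2 * I2 ≤ A / 2 := by linarith
  rw [ge_iff_le]
  have hfinal : (∫ x, (g₁ x * F₁ (u x) + g₂ x * F₂ (u x))) ≤
      A / 2 + c₀ * S ^ (-(1/2 : ℝ)) *
        (Real.sqrt (∫ x, (g₁ x) ^ 2) + Real.sqrt (∫ x, (g₂ x) ^ 2)) * Real.sqrt A := by
    have : c₀ * (Real.sqrt (∫ x, (g₁ x) ^ 2) * (S ^ (-(1/2 : ℝ)) * Real.sqrt A)) +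
        c₀ * (Real.sqrt (∫ x, (g₂ x) ^ 2) * (S ^ (-(1/2 : ℝ)) * Real.sqrt A)) =
        c₀ * S ^ (-(1/2 : ℝ)) *
          (Real.sqrt (∫ x, (g₁ x) ^ 2) + Real.sqrt (∫ x, (g₂ x) ^ 2)) * Real.sqrt A := by ring
    linarith
  linarith
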